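/- arXiv:1902.00196 — 2 statements merged into one kernel-verified Lean document; each statement's English description precedes it below -/
import Mathlib

section
/- Let F : CohI^n → CohI be a normal functor and X⃗ = (X₁,…,Xₙ) an n-tuple of coherence spaces. Then |F(X⃗)| = { F(ι₁,…,ιₙ)(y) | ⟨Y⃗⟩y ∈ NF(F), and ι_i : Y_i ↪ X_i are embeddings for i ∈ {1,…,n} }. -/
open CategoryTheory Limits

/-- A coherence space: a web together with a reflexive symmetric coherence relation. -/
structure CohSpace : Type 1 where
  web : Type
  coh : web → web → Prop
  refl : ∀ x, coh x x
  symm : ∀ {x y}, coh x y → coh y x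

/-- An embedding of coherence spaces: an injection preserving and reflecting coherence. -/
@[ext]
structure CohEmb (X Y : CohSpace) : Type where
  toFun : X.web → Y.web
  inj : Function.Injective toFun
  coh_iff : ∀ x x', X.coh x x' ↔ Y.coh (toFun x) (toFun x')

/-- The category `CohI` of coherence spaces and embeddings. -/
instance : Category CohSpace where
  Hom := CohEmb
  id X := ⟨id, fun _ _ h => h, fun _ _ => Iff.rfl⟩
  comp f g := ⟨g.toFun ∘ f.toFun, g.inj.comp f.inj,
    fun x x' => (f.coh_iff x x').trans (g.coh_iff _ _)⟩
  id_comp _ := rfl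
  comp_id _ := rfl
  assoc _ _ _ := rfl

/-- A clique: a set of pairwise coherent points. -/
def CohSpace.IsClique (X : CohSpace) (c : Set X.web) : Prop :=
  ∀ ⦃x⦄, x ∈ c → ∀ ⦃y⦄, y ∈ c → X.coh x y

/-- Linear negation (dual) of a coherence space. -/
def CohSpace.dual (X : CohSpace) : CohSpace where
  web := X.web
  coh x y := x = y ∨ ¬ X.coh x y
  refl _ := Or.inl rfl
  symm h := h.elim (fun h' => Or.inl h'.symm) (fun h' => Or.inr fun hc => h' (X.symm hc))

/-- Tensor product of coherence spaces. -/
def CohSpace.tens (X Y : CohSpace) : CohSpace where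
  web := X.web × Y.web
  coh p q := X.coh p.1 q.1 ∧ Y.coh p.2 q.2
  refl p := ⟨X.refl p.1, Y.refl p.2⟩
  symm h := ⟨X.symm h.1, Y.symm h.2⟩

/-- Direct sum (`⊕`) of coherence spaces. -/
def CohSpace.sum (X Y : CohSpace) : CohSpace where
  web := X.web ⊕ Y.web
  coh := Sum.LiftRel X.coh Y.coh
  refl x := by cases x with
    | inl a => exact Sum.LiftRel.inl (X.refl a)
    | inr b => exact Sum.LiftRel.inr (Y.refl b)
  symm h := by cases h with
    | inl h => exact Sum.LiftRel.inl (X.symm h)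
    | inr h => exact Sum.LiftRel.inr (Y.symm h)

/-- Linear implication `X ⊸ Y := (X ⊗ Y^⊥)^⊥`. -/
def CohSpace.lolly (X Y : CohSpace) : CohSpace := (X.tens Y.dual).dual

/-- The with connective `X & Y := (X^⊥ ⊕ Y^⊥)^⊥`. -/
def CohSpace.withc (X Y : CohSpace) : CohSpace := (X.dual.sum Y.dual).dual

/-- The one-point coherence space (interpretation of `1` and `⊥`). -/
def oneCoh : CohSpace where
  web := PUnit
  coh _ _ := True
  refl _ := trivial
  symm _ := trivial

/-- The empty coherence space (interpretation of `0` and `⊤`). -/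
def topCoh : CohSpace where
  web := Empty
  coh x _ := x.elim
  refl x := x.elim
  symm {x} _ := x.elim

/-- The induced embedding between duals. -/
def CohEmb.dualMap {X Y : CohSpace} (f : X ⟶ Y) : X.dual ⟶ Y.dual where
  toFun := f.toFun
  inj := f.inj
  coh_iff x x' := by
    constructor
    · rintro (rfl | h)
      · exact Or.inl rfl
      · exact Or.inr fun hc => h ((f.coh_iff _ _).2 hc)
    · rintro (h | h)
      · exact Or.inl (f.inj h)
      · exact Or.inr fun hc => h ((f.coh_iff _ _).1 hc)

/-- The induced embedding between tensor products. -/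
def CohEmb.tensMap {X X' Y Y' : CohSpace} (f : X ⟶ X') (g : Y ⟶ Y') :
    X.tens Y ⟶ X'.tens Y' where
  toFun := Prod.map f.toFun g.toFun
  inj := f.inj.prodMap g.inj
  coh_iff p q := and_congr (f.coh_iff _ _) (g.coh_iff _ _)

/-- The induced embedding between direct sums. -/
def CohEmb.sumMap {X X' Y Y' : CohSpace} (f : X ⟶ X') (g : Y ⟶ Y') :
    X.sum Y ⟶ X'.sum Y' where
  toFun := Sum.map f.toFun g.toFun
  inj := f.inj.sumMap g.inj
  coh_iff x x' := by
    constructor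
    · intro h
      cases h with
      | inl h => exact Sum.LiftRel.inl ((f.coh_iff _ _).1 h)
      | inr h => exact Sum.LiftRel.inr ((g.coh_iff _ _).1 h)
    · intro h
      cases x with
      | inl a => cases x' with
        | inl a' => exact Sum.LiftRel.inl ((f.coh_iff _ _).2 (by cases h; assumption))
        | inr b' => exact absurd h (by intro hh; cases hh)
      | inr b => cases x' with
        | inl a' => exact absurd h (by intro hh; cases hh)
        | inr b' => exact Sum.LiftRel.inr ((g.coh_iff _ _).2 (by cases h; assumption))

/-- Linear negation as a covariant endofunctor of `CohI`. -/
def dualFunctor : CohSpace ⥤ CohSpace where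
  obj := CohSpace.dual
  map := CohEmb.dualMap
  map_id _ := rfl
  map_comp _ _ := rfl

/-- Tensor as a functor on the product category. -/
def tensorFunctor : CohSpace × CohSpace ⥤ CohSpace where
  obj p := p.1.tens p.2
  map f := CohEmb.tensMap f.1 f.2
  map_id _ := rfl
  map_comp _ _ := rfl

/-- Sum as a functor on the product category. -/
def sumFunctor : CohSpace × CohSpace ⥤ CohSpace where
  obj p := p.1.sum p.2
  map f := CohEmb.sumMap f.1 f.2
  map_id p := by
    apply CohEmb.ext
    funext x
    cases x <;> rfl
  map_comp f g := by
    apply CohEmb.ext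
    funext x
    cases x <;> rfl

/-- The category `CohI^n`. -/
abbrev CohTuple (n : ℕ) := Fin n → CohSpace

/-- A normal functor: one preserving filtered colimits and finite pullbacks. -/
def IsNormalFunctor {C : Type*} {D : Type*} [Category C] [Category D] (F : C ⥤ D) : Prop :=
  PreservesFilteredColimits F ∧ PreservesLimitsOfShape WalkingCospan F

/-- The web functor `CohI ⥤ Set`. -/
def webF : CohSpace ⥤ Type where
  obj X := X.web
  map f := TypeCat.ofHom f.toFun
  map_id _ := rfl
  map_comp _ _ := rfl

/-- The category of elements of the web presheaf `|F|` of `F : CohI^n ⥤ CohI`. -/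
abbrev Elts {n : ℕ} (F : CohTuple n ⥤ CohSpace) := (F ⋙ webF).Elements

/-- `(X⃗, x)` is a normal form of `F`: its webs are finite and it is initial in its own
slice category of `El(|F|)`. -/
def IsNormalForm {n : ℕ} {F : CohTuple n ⥤ CohSpace} (e : Elts F) : Prop :=
  (∀ i, Finite (e.1 i).web) ∧
    ∀ (f : Elts F) (u : f ⟶ e), ∃! v : e ⟶ f, v ≫ u = 𝟙 e

/-- The pointwise dual functor `F^⊥`. -/
def dualF {n : ℕ} (F : CohTuple n ⥤ CohSpace) : CohTuple n ⥤ CohSpace := F ⋙ dualFunctor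

/-- The pointwise tensor functor `F ⊗ G`. -/
def tensF {n : ℕ} (F G : CohTuple n ⥤ CohSpace) : CohTuple n ⥤ CohSpace :=
  F.prod' G ⋙ tensorFunctor

/-- The pointwise sum functor `F ⊕ G`. -/
def sumF {n : ℕ} (F G : CohTuple n ⥤ CohSpace) : CohTuple n ⥤ CohSpace :=
  F.prod' G ⋙ sumFunctor

/-- The pointwise linear implication functor `F ⊸ G`. -/
def lollyF {n : ℕ} (F G : CohTuple n ⥤ CohSpace) : CohTuple n ⥤ CohSpace :=
  dualF (tensF F (dualF G))

/-- The degree of a normal functor: the supremum of the cardinalities of the webs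
occurring in its normal forms. -/
noncomputable def degree {n : ℕ} (F : CohTuple n ⥤ CohSpace) : ℕ∞ :=
  ⨆ (e : Elts F) (_ : IsNormalForm e) (i : Fin n), (Nat.card (e.1 i).web : ℕ∞)

/-- `F` sends coherence spaces with finite webs to coherence spaces with finite webs. -/
def PreservesFiniteWebs {n : ℕ} (F : CohTuple n ⥤ CohSpace) : Prop :=
  ∀ X : CohTuple n, (∀ i, Finite (X i).web) → Finite (F.obj X).web

/-- A finite normal functor: one preserving finiteness of webs and of finite degree. -/
def IsFiniteFunctor {n : ℕ} (F : CohTuple n ⥤ CohSpace) : Prop :=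
  PreservesFiniteWebs F ∧ degree F < ⊤

/-- `NF(F)`: the set of isomorphism classes of normal forms of `F`. -/
def NFSet {n : ℕ} (F : CohTuple n ⥤ CohSpace) :
    Set (Quotient (isIsomorphicSetoid (Elts F))) :=
  { q | ∃ e : Elts F, IsNormalForm e ∧ Quotient.mk _ e = q }

/-- A uniform family of cliques of `F : CohI^n ⥤ CohI`. -/
def IsUniformFamily {n : ℕ} (F : CohTuple n ⥤ CohSpace)
    (c : ∀ X : CohTuple n, Set (F.obj X).web) : Prop :=
  (∀ X, (F.obj X).IsClique (c X)) ∧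
    ∀ (X Y : CohTuple n) (ι : X ⟶ Y), c X = (F.map ι).toFun ⁻¹' c Y

/-- Coherence of two normal forms: all their instantiations along embeddings into a
common tuple are coherent. -/
def NFCoherent {n : ℕ} {F : CohTuple n ⥤ CohSpace} (e e' : Elts F) : Prop :=
  ∀ (Z : CohTuple n) (ι : e.1 ⟶ Z) (κ : e'.1 ⟶ Z),
    (F.obj Z).coh ((F.map ι).toFun e.2) ((F.map κ).toFun e'.2)

/-- A coherence space structure on a canonical finite web `Fin k`. -/
structure FinCohData where
  k : ℕ
  r : Fin k → Fin k → Prop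
  refl : ∀ i, r i i
  symm : ∀ {i j}, r i j → r j i

/-- The coherence space associated to a `FinCohData`. -/
def FinCohData.toCoh (d : FinCohData) : CohSpace where
  web := Fin d.k
  coh := d.r
  refl := d.refl
  symm := d.symm

/-- A canonical tuple of finite coherence spaces. -/
def canonTuple {n : ℕ} (d : Fin n → FinCohData) : CohTuple n := fun i => (d i).toCoh

/-- Self-coherent normal forms of `F` carried by canonical tuples of finite coherence
spaces; the web of the trace is the set of their isomorphism classes. -/
def CanonNF {n : ℕ} (F : CohTuple n ⥤ CohSpace) : Type :=
  Σ d : Fin n → FinCohData,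
    { x : (F.obj (canonTuple d)).web //
        IsNormalForm (F := F) ⟨canonTuple d, x⟩ ∧
          NFCoherent (F := F) ⟨canonTuple d, x⟩ ⟨canonTuple d, x⟩ }

/-- The element of `El(|F|)` carried by a canonical normal form. -/
def CanonNF.toElts {n : ℕ} {F : CohTuple n ⥤ CohSpace} (c : CanonNF F) : Elts F :=
  ⟨canonTuple c.1, c.2.1⟩

/-- Canonical normal forms are identified when isomorphic in `El(|F|)`. -/
def traceSetoid {n : ℕ} (F : CohTuple n ⥤ CohSpace) : Setoid (CanonNF F) :=
  (isIsomorphicSetoid (Elts F)).comap CanonNF.toElts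

/-- The trace `Tr(F)`: isomorphism classes of self-coherent normal forms, with the
coherence relation between normal forms. -/
def Tr {n : ℕ} (F : CohTuple n ⥤ CohSpace) : CohSpace where
  web := Quotient (traceSetoid F)
  coh q q' := ∃ c c' : CanonNF F,
    Quotient.mk (traceSetoid F) c = q ∧ Quotient.mk (traceSetoid F) c' = q' ∧
      NFCoherent c.toElts c'.toElts
  refl q := by
    obtain ⟨c, rfl⟩ := Quotient.exists_rep q
    exact ⟨c, c, rfl, rfl, c.2.2.2⟩
  symm h := by
    obtain ⟨c, c', h1, h2, h3⟩ := h
    exact ⟨c', c, h2, h1, fun Z ι κ => (F.obj Z).symm (h3 Z κ ι)⟩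

/-- The family of functors whose pointwise pairing computes `Z ↦ (X₁,…,Xₙ,Z)`. -/
def gfam {n : ℕ} (X : CohTuple n) (i : Fin (n + 1)) : CohTuple 1 ⥤ CohSpace :=
  if h : (i : ℕ) < n then (Functor.const (CohTuple 1)).obj (X ⟨i, h⟩)
  else Pi.eval (fun _ : Fin 1 => CohSpace) 0

/-- The partial application `F(X₁,…,Xₙ,−)` of `F : CohI^(n+1) ⥤ CohI`. -/
def partialApp {n : ℕ} (F : CohTuple (n + 1) ⥤ CohSpace) (X : CohTuple n) :
    CohTuple 1 ⥤ CohSpace :=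
  Functor.pi' (gfam X) ⋙ F

/-- The embedding `(X⃗, Z) ↪ (Y⃗, Z)` induced componentwise by `ι : X⃗ ↪ Y⃗`. -/
def extHom {n : ℕ} {X Y : CohTuple n} (ι : X ⟶ Y) (Z : CohTuple 1) (i : Fin (n + 1)) :
    (gfam X i).obj Z ⟶ (gfam Y i).obj Z := by
  by_cases h : (i : ℕ) < n
  · simp only [gfam, dif_pos h]
    exact ι ⟨i, h⟩
  · simp only [gfam, dif_neg h]
    exact 𝟙 (Z 0)

/-- The embedding `extHom` as a morphism in `CohI^(n+1)`. -/
def extHomPi {n : ℕ} {X Y : CohTuple n} (ι : X ⟶ Y) (Z : CohTuple 1) :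
    (Functor.pi' (gfam X)).obj Z ⟶ (Functor.pi' (gfam Y)).obj Z :=
  fun i => extHom ι Z i

/-- Transport along an object equality `G.obj X = Tr (partialApp F X)`. -/
def trWebCast {n : ℕ} {F : CohTuple (n + 1) ⥤ CohSpace} {G : CohTuple n ⥤ CohSpace}
    (h : ∀ X, G.obj X = Tr (partialApp F X)) (X : CohTuple n) :
    (Tr (partialApp F X)).web → (G.obj X).web :=
  fun q => cast (congrArg CohSpace.web (h X)).symm q

/-- `G` acts on embeddings the way `∀(F)` does: normal forms are transported by
keeping the bound variables and substituting along `ι` on the free ones. -/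
def ForallAction {n : ℕ} (F : CohTuple (n + 1) ⥤ CohSpace) (G : CohTuple n ⥤ CohSpace)
    (hobj : ∀ X, G.obj X = Tr (partialApp F X)) : Prop :=
  ∀ (X Y : CohTuple n) (ι : X ⟶ Y) (c : CanonNF (partialApp F X)),
    ∃ c' : CanonNF (partialApp F Y),
      (G.map ι).toFun (trWebCast hobj X (Quotient.mk (traceSetoid _) c))
          = trWebCast hobj Y (Quotient.mk (traceSetoid _) c') ∧
        c'.1 = c.1 ∧
        HEq c'.2.1 ((F.map (extHomPi ι (canonTuple c.1))).toFun c.2.1)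

/-- `G` is (a presentation of) the functor `∀(F)`. -/
def IsForallExtension {n : ℕ} (F : CohTuple (n + 1) ⥤ CohSpace)
    (G : CohTuple n ⥤ CohSpace) : Prop :=
  ∃ hobj : ∀ X, G.obj X = Tr (partialApp F X), ForallAction F G hobj

/-- The uniform family of cliques obtained by instantiating a clique of the trace. -/
def instFam {n : ℕ} (F : CohTuple n ⥤ CohSpace) (c : Set (Tr F).web) :
    ∀ X : CohTuple n, Set (F.obj X).web := fun X =>
  { x | ∃ (d : CanonNF F) (ι : canonTuple d.1 ⟶ X),
      Quotient.mk (traceSetoid F) d ∈ c ∧ (F.map ι).toFun d.2.1 = x }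

/-!
Every coherence space is the filtered colimit of its restrictions to finite subsets of its
web, so, `F` preserving filtered colimits, every `x ∈ |F(X⃗)|` is the image `F(ι)(y)` of an
element `y` over a tuple of finite webs. Choose such a pair `(Y⃗, y)` with the total size of
the webs of `Y⃗` minimal. Any morphism `(Z⃗, z) ⟶ (Y⃗, y)` of `El(|F|)` then consists of
injections between finite webs that cannot decrease this size, hence of bijections, so it is
an isomorphism; and an object into which every morphism is an isomorphism is initial in its
own slice, i.e. a normal form.
-/

namespace CohSpace

def restrict (X : CohSpace) (s : Set X.web) : CohSpace where
  web := s
  coh a b := X.coh a b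
  refl a := X.refl a
  symm h := X.symm h

def restrictIncl (X : CohSpace) (s : Set X.web) : X.restrict s ⟶ X :=
  ⟨Subtype.val, Subtype.val_injective, fun _ _ => Iff.rfl⟩

theorem exists_ι_apply_eq_of_isColimit {J : Type*} [Category J] {K : J ⥤ CohSpace}
    {c : Cocone K} (hc : IsColimit c) (x : c.pt.web) :
    ∃ (j : J) (y : (K.obj j).web), (c.ι.app j).toFun y = x := by
  let U : Set c.pt.web := ⋃ j, Set.range (c.ι.app j).toFun
  -- Corestricting `c` to the union `U` of the images of its legs yields a section of `U ↪ c.pt`.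
  let c' : Cocone K :=
    { pt := c.pt.restrict U
      ι :=
        { app := fun j =>
            ⟨fun y => ⟨(c.ι.app j).toFun y, Set.mem_iUnion.2 ⟨j, y, rfl⟩⟩,
              fun _ _ h => (c.ι.app j).inj (congrArg Subtype.val h),
              fun a b => (c.ι.app j).coh_iff a b⟩
          naturality := fun _ _ f => CohEmb.ext (funext fun y =>
            Subtype.ext (congrFun (congrArg CohEmb.toFun (c.w f)) y)) } }
  have hsection : hc.desc c' ≫ c.pt.restrictIncl U = 𝟙 c.pt :=
    hc.hom_ext fun j => by rw [← Category.assoc, hc.fac c' j]; rfl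
  have hval : ((hc.desc c').toFun x).1 = x := congrFun (congrArg CohEmb.toFun hsection) x
  have hxU : x ∈ U := hval ▸ ((hc.desc c').toFun x).2
  obtain ⟨j, y, hy⟩ := Set.mem_iUnion.1 hxU
  exact ⟨j, y, hy⟩

end CohSpace

namespace CohEmb

theorem isIso_of_bijective {X Y : CohSpace} (f : X ⟶ Y) (hf : Function.Bijective f.toFun) :
    IsIso f := by
  let e := Equiv.ofBijective f.toFun hf
  let g : Y ⟶ X :=
    ⟨e.symm, e.symm.injective, fun y y' => by
      rw [f.coh_iff, show f.toFun (e.symm y) = y from e.apply_symm_apply y,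
        show f.toFun (e.symm y') = y' from e.apply_symm_apply y']⟩
  exact ⟨g, CohEmb.ext (funext e.symm_apply_apply), CohEmb.ext (funext e.apply_symm_apply)⟩

theorem card_le {X Y : CohSpace} [Finite Y.web] (f : X ⟶ Y) :
    Nat.card X.web ≤ Nat.card Y.web :=
  Nat.card_le_card_of_injective _ f.inj

theorem bijective_of_card_le {X Y : CohSpace} [Finite Y.web] (f : X ⟶ Y)
    (h : Nat.card Y.web ≤ Nat.card X.web) : Function.Bijective f.toFun :=
  (Nat.bijective_iff_injective_and_card _).2 ⟨f.inj, f.card_le.antisymm h⟩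

end CohEmb

namespace CohTuple

variable {n : ℕ}

noncomputable def totalCard (X : CohTuple n) : ℕ := ∑ i, Nat.card (X i).web

theorem finite_of_hom {X Y : CohTuple n} (u : X ⟶ Y) (hY : ∀ i, Finite (Y i).web) (i : Fin n) :
    Finite (X i).web :=
  Finite.of_injective _ (u i).inj

theorem isIso_of_totalCard_le {X Y : CohTuple n} (u : X ⟶ Y) (hY : ∀ i, Finite (Y i).web)
    (h : totalCard Y ≤ totalCard X) : IsIso u := by
  have hle : ∀ i ∈ Finset.univ, Nat.card (X i).web ≤ Nat.card (Y i).web :=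
    fun i _ => (u i).card_le
  have hcard := (Finset.sum_eq_sum_iff_of_le hle).1 ((Finset.sum_le_sum hle).antisymm h)
  exact (isIso_pi_iff u).2 fun i =>
    (u i).isIso_of_bijective ((u i).bijective_of_card_le (hcard i (Finset.mem_univ i)).ge)

abbrev FinSupport (X : CohTuple n) : Type := Finset ((i : Fin n) × (X i).web)

def supportIn (X : CohTuple n) (S : FinSupport X) (i : Fin n) : Set (X i).web :=
  {a | ⟨i, a⟩ ∈ S}

instance finite_supportIn (X : CohTuple n) (S : FinSupport X) (i : Fin n) :
    Finite (X.supportIn S i) :=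
  (S.finite_toSet.preimage sigma_mk_injective.injOn).to_subtype

theorem mem_supportIn_singleton (X : CohTuple n) (i : Fin n) (a : (X i).web) :
    a ∈ X.supportIn {⟨i, a⟩} i :=
  Finset.mem_singleton_self _

theorem mem_supportIn_pair (X : CohTuple n) [DecidableEq ((i : Fin n) × (X i).web)]
    (i : Fin n) (a b : (X i).web) :
    a ∈ X.supportIn {⟨i, a⟩, ⟨i, b⟩} i ∧ b ∈ X.supportIn {⟨i, a⟩, ⟨i, b⟩} i := by
  simp [supportIn]

def restrictTo (X : CohTuple n) (S : FinSupport X) : CohTuple n :=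
  fun i => (X i).restrict (X.supportIn S i)

def finRestrictDiagram (X : CohTuple n) : FinSupport X ⥤ CohTuple n where
  obj := X.restrictTo
  map f i :=
    ⟨Set.inclusion fun _ ha => leOfHom f ha, Set.inclusion_injective _, fun _ _ => Iff.rfl⟩

def finRestrictCocone (X : CohTuple n) : Cocone X.finRestrictDiagram where
  pt := X
  ι := { app := fun S i => (X i).restrictIncl (X.supportIn S i) }

section FinRestrictDesc

variable {X : CohTuple n} (s : Cocone X.finRestrictDiagram)

theorem finRestrictLeg_apply_eq_of_le {S T : FinSupport X} (hST : S ≤ T) {i : Fin n} (a : (X i).web)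
    (haS : a ∈ X.supportIn S i) :
    (s.ι.app S i).toFun ⟨a, haS⟩ = (s.ι.app T i).toFun ⟨a, hST haS⟩ :=
  congrFun (congrArg (fun g : X.restrictTo S ⟶ s.pt => (g i).toFun) (s.w (homOfLE hST))).symm _

def finRestrictDescFun (i : Fin n) (a : (X i).web) : (s.pt i).web :=
  (s.ι.app {⟨i, a⟩} i).toFun ⟨a, X.mem_supportIn_singleton i a⟩

theorem finRestrictDescFun_eq_leg {T : FinSupport X} {i : Fin n} {a : (X i).web}
    (ha : a ∈ X.supportIn T i) : finRestrictDescFun s i a = (s.ι.app T i).toFun ⟨a, ha⟩ :=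
  finRestrictLeg_apply_eq_of_le s (Finset.singleton_subset_iff.2 ha) a _

def finRestrictDesc : X ⟶ s.pt := fun i =>
  { toFun := finRestrictDescFun s i
    inj := fun a b hab => by
      classical
      obtain ⟨ha, hb⟩ := X.mem_supportIn_pair i a b
      rw [finRestrictDescFun_eq_leg s ha, finRestrictDescFun_eq_leg s hb] at hab
      exact congrArg Subtype.val ((s.ι.app _ i).inj hab)
    coh_iff := fun a b => by
      classical
      obtain ⟨ha, hb⟩ := X.mem_supportIn_pair i a b
      rw [finRestrictDescFun_eq_leg s ha, finRestrictDescFun_eq_leg s hb]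
      exact (s.ι.app _ i).coh_iff ⟨a, ha⟩ ⟨b, hb⟩ }

end FinRestrictDesc

def finRestrictCoconeIsColimit (X : CohTuple n) : IsColimit X.finRestrictCocone where
  desc := finRestrictDesc
  fac s _ := funext fun _ => CohEmb.ext (funext fun a => finRestrictDescFun_eq_leg s a.2)
  uniq s _ hm := funext fun i => CohEmb.ext (funext fun a =>
    congrFun (congrArg (fun g : X.restrictTo {⟨i, a⟩} ⟶ s.pt => (g i).toFun) (hm {⟨i, a⟩}))
      ⟨a, X.mem_supportIn_singleton i a⟩)

end CohTuple

open CohTuple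

section NormalForms

variable {n : ℕ} {F : CohTuple n ⥤ CohSpace}

theorem Elts.map_comp_apply_of_hom {e f : Elts F} (u : f ⟶ e) {X : CohTuple n} (ι : e.1 ⟶ X) :
    (F.map (u.1 ≫ ι)).toFun f.2 = (F.map ι).toFun e.2 := by
  rw [F.map_comp]
  exact congrArg (F.map ι).toFun u.2

theorem isNormalForm_of_forall_isIso {e : Elts F} (hfin : ∀ i, Finite (e.1 i).web)
    (hiso : ∀ (f : Elts F) (u : f ⟶ e), IsIso u) : IsNormalForm e := by
  refine ⟨hfin, fun f u => ?_⟩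
  have := hiso f u
  exact ⟨inv u, IsIso.inv_hom_id u, fun v hv => by rw [← cancel_mono u, hv, IsIso.inv_hom_id]⟩

theorem isNormalForm_of_totalCard_le {e : Elts F} (hfin : ∀ i, Finite (e.1 i).web)
    (hmin : ∀ (f : Elts F), (f ⟶ e) → totalCard e.1 ≤ totalCard f.1) : IsNormalForm e :=
  isNormalForm_of_forall_isIso hfin fun f u =>
    have : IsIso ((CategoryOfElements.π _).map u) := isIso_of_totalCard_le u.1 hfin (hmin f u)
    isIso_of_reflects_iso u (CategoryOfElements.π _)

end NormalForms

theorem stmt4 {n : ℕ} (F : CohTuple n ⥤ CohSpace) (hF : IsNormalFunctor F)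
    (X : CohTuple n) :
    { x : (F.obj X).web | ∃ (e : Elts F) (ι : e.1 ⟶ X),
        IsNormalForm e ∧ (F.map ι).toFun e.2 = x } = Set.univ := by
  refine Set.eq_univ_of_forall fun x => ?_
  have := hF.1
  obtain ⟨S, y, hy⟩ := CohSpace.exists_ι_apply_eq_of_isColimit
    (isColimitOfPreserves F X.finRestrictCoconeIsColimit) x
  let finiteLifts : Set (Elts F) :=
    {e | (∀ i, Finite (e.1 i).web) ∧ ∃ ι : e.1 ⟶ X, (F.map ι).toFun e.2 = x}
  obtain ⟨e, ⟨hfin, ι, hι⟩, hmin⟩ :=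
    (measure fun e : Elts F => totalCard e.1).wf.has_min finiteLifts
      ⟨⟨X.restrictTo S, y⟩, fun i => finite_supportIn X S i, X.finRestrictCocone.ι.app S, hy⟩
  refine ⟨e, ι, isNormalForm_of_totalCard_le hfin fun f u => not_lt.1 fun hlt => ?_, hι⟩
  exact hmin f ⟨finite_of_hom u.1 hfin, u.1 ≫ ι, (Elts.map_comp_apply_of_hom u ι).trans hι⟩ hlt
end

section
/- Let F : CohI^{n+1} → CohI be a normal functor. Then the assignment on objects X⃗ ↦ Tr(F(X₁,…,Xₙ,−)) extends to a normal functor ∀(F) : CohI^n → CohI; that is, there exists a functor CohI^n → CohI preserving filtered colimits and finite pullbacks whose object map sends X⃗ to the trace of the normal functor F(X⃗,−) : CohI → CohI. -/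
open CategoryTheory Limits

/-!
An embedding `ι : X⃗ ↪ Y⃗` induces a natural transformation `F(ι, −) : F(X⃗, −) ⟶ F(Y⃗, −)`
whose naturality squares are images under `F` of pullback squares, hence pullbacks. Such a
cartesian transformation sends normal forms to normal forms and preserves and reflects their
coherence, so it induces an embedding of traces; this is `∀(F)` on morphisms.

Pullbacks and filtered colimits of embeddings are computed on webs. For pullbacks, two normal
forms with the same image in `Tr(F(C⃗, −))` are moved onto a common tuple `Z` and lifted
through the image under `F` of the pullback square `(P⃗, Z) → (A⃗, Z), (B⃗, Z) → (C⃗, Z)`. Over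
a filtered diagram, a cocone whose legs are jointly surjective is already a colimit, because the
legs are embeddings; and every normal form of `F(colim X⃗ⱼ, −)` comes from a stage, since `F`
preserves filtered colimits and normal forms pull back along embeddings.
-/

namespace CohEmb

@[simp] lemma comp_toFun {X Y Z : CohSpace} (f : X ⟶ Y) (g : Y ⟶ Z) (x : X.web) :
    (f ≫ g).toFun x = g.toFun (f.toFun x) := rfl

lemma congr_toFun {X Y : CohSpace} {f g : X ⟶ Y} (h : f = g) (x : X.web) :
    f.toFun x = g.toFun x := by rw [h]

end CohEmb

namespace CohSpace

section FilteredColimit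

variable {J : Type} [SmallCategory J] {D : J ⥤ CohSpace}

lemma cocone_w_toFun (c : Cocone D) {j l : J} (u : j ⟶ l) (x : (D.obj j).web) :
    (c.ι.app l).toFun ((D.map u).toFun x) = (c.ι.app j).toFun x :=
  CohEmb.congr_toFun (c.w u) x

lemma cocone_toFun_eq_of_map_eq (c : Cocone D) {j k l : J} {u : j ⟶ l} {v : k ⟶ l}
    {x : (D.obj j).web} {y : (D.obj k).web} (h : (D.map u).toFun x = (D.map v).toFun y) :
    (c.ι.app j).toFun x = (c.ι.app k).toFun y := by
  rw [← cocone_w_toFun c u, ← cocone_w_toFun c v, h]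

variable [IsFiltered J]

/-- Holds for every cocone, not only for colimits, because the legs of a cocone are injective. -/
lemma exists_map_eq_of_cocone_toFun_eq (c : Cocone D) {j k : J} {x : (D.obj j).web}
    {y : (D.obj k).web} (h : (c.ι.app j).toFun x = (c.ι.app k).toFun y) :
    ∃ (l : J) (u : j ⟶ l) (v : k ⟶ l), (D.map u).toFun x = (D.map v).toFun y := by
  refine ⟨_, IsFiltered.leftToMax j k, IsFiltered.rightToMax j k, (c.ι.app _).inj ?_⟩
  rwa [cocone_w_toFun, cocone_w_toFun]

lemma exists_common_stage (c : Cocone D)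
    (surj : ∀ x : c.pt.web, ∃ j y, (c.ι.app j).toFun y = x) (x x' : c.pt.web) :
    ∃ (l : J) (y y' : (D.obj l).web), (c.ι.app l).toFun y = x ∧ (c.ι.app l).toFun y' = x' := by
  obtain ⟨j, y, rfl⟩ := surj x
  obtain ⟨k, y', rfl⟩ := surj x'
  exact ⟨_, _, _, cocone_w_toFun c (IsFiltered.leftToMax j k) y,
    cocone_w_toFun c (IsFiltered.rightToMax j k) y'⟩

noncomputable def isColimitOfSurjective (t : Cocone D)
    (surj : ∀ x : t.pt.web, ∃ j y, (t.ι.app j).toFun y = x) : IsColimit t := by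
  choose stage rep hrep using surj
  have desc_spec (s : Cocone D) {j : J} (y : (D.obj j).web) :
      (s.ι.app (stage ((t.ι.app j).toFun y))).toFun (rep _) = (s.ι.app j).toFun y := by
    obtain ⟨l, u, v, h⟩ := exists_map_eq_of_cocone_toFun_eq t (hrep ((t.ι.app j).toFun y))
    exact cocone_toFun_eq_of_map_eq s h
  refine
    { desc := fun s =>
        { toFun := fun x => (s.ι.app (stage x)).toFun (rep x)
          inj := fun x x' h => ?_
          coh_iff := fun x x' => ?_ }
      fac := fun s j => CohEmb.ext (funext fun y => desc_spec s y)
      uniq := fun s m hm => CohEmb.ext (funext fun x => ?_) }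
  · obtain ⟨l, y, y', rfl, rfl⟩ := exists_common_stage t (fun x => ⟨_, _, hrep x⟩) x x'
    dsimp only at h
    rw [desc_spec, desc_spec] at h
    rw [(s.ι.app l).inj h]
  · obtain ⟨l, y, y', rfl, rfl⟩ := exists_common_stage t (fun x => ⟨_, _, hrep x⟩) x x'
    rw [desc_spec, desc_spec]
    exact ((t.ι.app l).coh_iff _ _).symm.trans ((s.ι.app l).coh_iff _ _)
  · conv_lhs => rw [← hrep x]
    exact CohEmb.congr_toFun (hm _) _

lemma ιColimitType_eq_iff {j k : J} (x : (D.obj j).web) (y : (D.obj k).web) :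
    (D ⋙ webF).ιColimitType j x = (D ⋙ webF).ιColimitType k y ↔
      ∃ (l : J) (u : j ⟶ l) (v : k ⟶ l), (D.map u).toFun x = (D.map v).toFun y :=
  Functor.ιColimitType_eq_iff_of_isFiltered (D ⋙ webF) x y

lemma exists_map_eq_map_of_ιColimitType_eq {j k : J} {x y : (D.obj j).web}
    {x' y' : (D.obj k).web}
    (hx : (D ⋙ webF).ιColimitType j x = (D ⋙ webF).ιColimitType k x')
    (hy : (D ⋙ webF).ιColimitType j y = (D ⋙ webF).ιColimitType k y') :
    ∃ (l : J) (u : j ⟶ l) (v : k ⟶ l),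
      (D.map u).toFun x = (D.map v).toFun x' ∧ (D.map u).toFun y = (D.map v).toFun y' := by
  obtain ⟨l₁, u₁, v₁, hx⟩ := (ιColimitType_eq_iff x x').1 hx
  obtain ⟨l₂, u₂, v₂, hy⟩ := (ιColimitType_eq_iff y y').1 hy
  obtain ⟨l, α, β, hu, hv⟩ := IsFiltered.bowtie u₁ u₂ v₁ v₂
  refine ⟨l, u₁ ≫ α, v₁ ≫ α, ?_, ?_⟩
  · simp only [D.map_comp, CohEmb.comp_toFun, hx]
  · rw [hu, hv]
    simp only [D.map_comp, CohEmb.comp_toFun, hy]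

variable (D) in
def filteredColimit : CohSpace where
  web := (D ⋙ webF).ColimitType
  coh q q' := ∃ (j : J) (x y : (D.obj j).web),
    (D ⋙ webF).ιColimitType j x = q ∧ (D ⋙ webF).ιColimitType j y = q' ∧ (D.obj j).coh x y
  refl q := by
    obtain ⟨j, x, rfl⟩ := (D ⋙ webF).ιColimitType_jointly_surjective q
    exact ⟨j, x, x, rfl, rfl, (D.obj j).refl x⟩
  symm := fun ⟨j, x, y, hx, hy, h⟩ => ⟨j, y, x, hy, hx, (D.obj j).symm h⟩

variable (D) in
def filteredColimitCocone : Cocone D where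
  pt := filteredColimit D
  ι.app j :=
    { toFun := (D ⋙ webF).ιColimitType j
      inj := fun x y h => by
        obtain ⟨l, u, v, hx, hy⟩ := exists_map_eq_map_of_ιColimitType_eq h rfl
        exact (D.map u).inj (hx.trans hy.symm)
      coh_iff := fun x y => by
        refine ⟨fun h => ⟨j, x, y, rfl, rfl, h⟩, fun ⟨k, x', y', hx, hy, h⟩ => ?_⟩
        obtain ⟨l, u, v, hx, hy⟩ := exists_map_eq_map_of_ιColimitType_eq hx hy
        rw [(D.map v).coh_iff, ← hx, ← hy]
        exact ((D.map u).coh_iff _ _).1 h }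
  ι.naturality j k u := CohEmb.ext (funext fun x => (D ⋙ webF).ιColimitType_map u x)

variable (D) in
noncomputable def isColimitFilteredColimitCocone : IsColimit (filteredColimitCocone D) :=
  isColimitOfSurjective _ (D ⋙ webF).ιColimitType_jointly_surjective

lemma exists_toFun_eq_of_isColimit {t : Cocone D} (ht : IsColimit t) (x : t.pt.web) :
    ∃ (j : J) (y : (D.obj j).web), (t.ι.app j).toFun y = x := by
  let e := (isColimitFilteredColimitCocone D).coconePointUniqueUpToIso ht
  obtain ⟨j, y, hy⟩ := (D ⋙ webF).ιColimitType_jointly_surjective (e.inv.toFun x)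
  refine ⟨j, y, ?_⟩
  rw [← CohEmb.congr_toFun
    ((isColimitFilteredColimitCocone D).comp_coconePointUniqueUpToIso_hom ht j) y]
  exact (congrArg e.hom.toFun hy).trans (CohEmb.congr_toFun e.inv_hom_id x)

end FilteredColimit

section Pullback

variable {P A B Z : CohSpace} {fst : P ⟶ A} {snd : P ⟶ B} {f : A ⟶ Z} {g : B ⟶ Z}

def point (X : CohSpace) (x : X.web) : oneCoh ⟶ X where
  toFun _ := x
  inj _ _ _ := rfl
  coh_iff _ _ := ⟨fun _ => X.refl x, fun _ => trivial⟩

lemma exists_toFun_of_isPullback (h : IsPullback fst snd f g) {a : A.web} {b : B.web}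
    (hab : f.toFun a = g.toFun b) : ∃ p : P.web, fst.toFun p = a ∧ snd.toFun p = b := by
  have w : point A a ≫ f = point B b ≫ g := CohEmb.ext (funext fun _ => hab)
  exact ⟨(h.lift _ _ w).toFun PUnit.unit, CohEmb.congr_toFun (h.lift_fst _ _ w) _,
    CohEmb.congr_toFun (h.lift_snd _ _ w) _⟩

lemma isPullback_of_exists_toFun (w : fst ≫ f = snd ≫ g)
    (h : ∀ a b, f.toFun a = g.toFun b → ∃ p : P.web, fst.toFun p = a ∧ snd.toFun p = b) :
    IsPullback fst snd f g := by
  choose lift hlift using h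
  refine IsPullback.of_isLimit (PullbackCone.IsLimit.mk w
    (fun s =>
      { toFun := fun q => lift _ _ (CohEmb.congr_toFun s.condition q)
        inj := fun q q' hq => s.fst.inj <| by simpa only [hlift] using congrArg fst.toFun hq
        coh_iff := fun q q' => by
          rw [s.fst.coh_iff, fst.coh_iff, (hlift _ _ (CohEmb.congr_toFun s.condition q)).1,
            (hlift _ _ (CohEmb.congr_toFun s.condition q')).1] })
    (fun s => CohEmb.ext (funext fun q => (hlift _ _ _).1))
    (fun s => CohEmb.ext (funext fun q => (hlift _ _ _).2))
    (fun s m hm _ => CohEmb.ext (funext fun q => fst.inj ?_)))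
  exact (CohEmb.congr_toFun hm q).trans (hlift _ _ _).1.symm

def pullback (f : A ⟶ Z) (g : B ⟶ Z) : CohSpace where
  web := { p : A.web × B.web // f.toFun p.1 = g.toFun p.2 }
  coh p q := A.coh p.1.1 q.1.1
  refl _ := A.refl _
  symm h := A.symm h

def pullbackFst (f : A ⟶ Z) (g : B ⟶ Z) : pullback f g ⟶ A where
  toFun p := p.1.1
  inj := by
    rintro ⟨⟨a, b⟩, hp⟩ ⟨⟨a', b'⟩, hq⟩ (rfl : a = a')
    exact Subtype.ext (Prod.ext rfl (g.inj (hp.symm.trans hq)))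
  coh_iff _ _ := Iff.rfl

def pullbackSnd (f : A ⟶ Z) (g : B ⟶ Z) : pullback f g ⟶ B where
  toFun p := p.1.2
  inj := by
    rintro ⟨⟨a, b⟩, hp⟩ ⟨⟨a', b'⟩, hq⟩ (rfl : b = b')
    exact Subtype.ext (Prod.ext (f.inj (hp.trans hq.symm)) rfl)
  coh_iff p q := by
    show A.coh _ _ ↔ _
    rw [f.coh_iff, p.2, q.2, ← g.coh_iff]

lemma isPullback_pullback (f : A ⟶ Z) (g : B ⟶ Z) :
    IsPullback (pullbackFst f g) (pullbackSnd f g) f g :=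
  isPullback_of_exists_toFun (CohEmb.ext (funext fun p => p.2))
    fun a b hab => ⟨⟨(a, b), hab⟩, rfl, rfl⟩

end Pullback

end CohSpace

lemma isPullback_pi {I : Type*} {C : I → Type*} [∀ i, Category (C i)] {P A B Z : ∀ i, C i}
    {fst : P ⟶ A} {snd : P ⟶ B} {f : A ⟶ Z} {g : B ⟶ Z}
    (h : ∀ i, IsPullback (fst i) (snd i) (f i) (g i)) : IsPullback fst snd f g :=
  IsPullback.of_isLimit (PullbackCone.IsLimit.mk (funext fun i => (h i).w)
    (fun (s : PullbackCone f g) i => (h i).lift (s.fst i) (s.snd i) (congrFun s.condition i))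
    (fun s => funext fun i => (h i).lift_fst _ _ _)
    (fun s => funext fun i => (h i).lift_snd _ _ _)
    (fun s m hm hm' => funext fun i => (h i).hom_ext
      (by rw [(h i).lift_fst]; exact congrFun hm i) (by rw [(h i).lift_snd]; exact congrFun hm' i)))

lemma preservesLimitsOfShape_walkingCospan_of_isPullback {C D : Type*} [Category C] [Category D]
    (G : C ⥤ D)
    (h : ∀ {A B Z : C} (f : A ⟶ Z) (g : B ⟶ Z), ∃ (P : C) (fst : P ⟶ A) (snd : P ⟶ B),
      IsPullback fst snd f g ∧ IsPullback (G.map fst) (G.map snd) (G.map f) (G.map g)) :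
    PreservesLimitsOfShape WalkingCospan G where
  preservesLimit {K} := by
    obtain ⟨P, fst, snd, hP, hGP⟩ := h (K.map WalkingCospan.Hom.inl) (K.map WalkingCospan.Hom.inr)
    have := preservesLimit_of_preserves_limit_cone hP.isLimit
      ((isLimitMapConePullbackConeEquiv G hP.w).symm hGP.isLimit)
    exact preservesLimit_of_iso_diagram G (diagramIsoCospan K).symm

section PiFilteredColimit

variable {m : ℕ} {J : Type} [SmallCategory J] [IsFiltered J] (K : J ⥤ CohTuple m)

def piFilteredColimitCocone : Cocone K :=
  pi.coconeOfCoconeCompEval fun i => CohSpace.filteredColimitCocone (K ⋙ Pi.eval _ i)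

noncomputable def isColimitPiFilteredColimitCocone : IsColimit (piFilteredColimitCocone K) :=
  pi.coconeOfCoconeEvalIsColimit fun _ => CohSpace.isColimitFilteredColimitCocone _

end PiFilteredColimit

section NormalForm

variable {m : ℕ} {H H' : CohTuple m ⥤ CohSpace}

lemma elts_section_eq {e f : Elts H} (u : f ⟶ e) {v v' : e ⟶ f} (hv : v ≫ u = 𝟙 e)
    (hv' : v' ≫ u = 𝟙 e) : v = v' := by
  refine Subtype.ext (funext fun i => CohEmb.ext (funext fun x => (u.1 i).inj ?_))
  exact congrArg (fun w : e ⟶ e => (w.1 i).toFun x) (hv.trans hv'.symm)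

lemma isNormalForm_of_exists_section {e : Elts H} (hfin : ∀ i, Finite (e.1 i).web)
    (h : ∀ (f : Elts H) (u : f ⟶ e), ∃ v : e ⟶ f, v ≫ u = 𝟙 e) : IsNormalForm e :=
  ⟨hfin, fun f u => (h f u).imp fun _ hv => ⟨hv, fun _ hv' => elts_section_eq u hv' hv⟩⟩

def IsCartesian (η : H ⟶ H') : Prop :=
  ∀ ⦃W Z : CohTuple m⦄ (u : W ⟶ Z) (w : (H'.obj W).web) (x : (H.obj Z).web),
    (H'.map u).toFun w = (η.app Z).toFun x →
      ∃ v : (H.obj W).web, (η.app W).toFun v = w ∧ (H.map u).toFun v = x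

lemma naturality_toFun (η : H ⟶ H') {W Z : CohTuple m} (u : W ⟶ Z) (x : (H.obj W).web) :
    (η.app Z).toFun ((H.map u).toFun x) = (H'.map u).toFun ((η.app W).toFun x) :=
  CohEmb.congr_toFun (η.naturality u) x

lemma IsNormalForm.map {η : H ⟶ H'} (hη : IsCartesian η) {X : CohTuple m} {x : (H.obj X).web}
    (he : IsNormalForm (F := H) ⟨X, x⟩) :
    IsNormalForm (F := H') ⟨X, (η.app X).toFun x⟩ := by
  refine isNormalForm_of_exists_section he.1 fun ⟨Y, y⟩ ⟨u, hu⟩ => ?_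
  obtain ⟨v, hv, hvx⟩ := hη u y x hu
  obtain ⟨⟨s, hs⟩, hsu, -⟩ := he.2 ⟨Y, v⟩ ⟨u, hvx⟩
  have hsu : s ≫ u = 𝟙 X := congrArg Subtype.val hsu
  refine ⟨⟨s, ?_⟩, Subtype.ext hsu⟩
  change (H'.map s).toFun ((η.app X).toFun x) = y
  rw [← naturality_toFun, show (H.map s).toFun x = v from hs, hv]

lemma IsNormalForm.of_map (η : H ⟶ H') {X : CohTuple m} {x : (H.obj X).web}
    (hfin : ∀ i, Finite (X i).web) (he : IsNormalForm (F := H') ⟨X, (η.app X).toFun x⟩) :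
    IsNormalForm (F := H) ⟨X, x⟩ := by
  refine isNormalForm_of_exists_section hfin fun ⟨Y, y⟩ u => ?_
  obtain ⟨⟨s, hs⟩, hsu, -⟩ :=
    he.2 _ ((CategoryOfElements.map (Functor.whiskerRight η webF)).map u)
  have hsu : s ≫ u.1 = 𝟙 X := congrArg Subtype.val hsu
  exact ⟨⟨s, (η.app Y).inj ((naturality_toFun η s x).trans hs)⟩, Subtype.ext hsu⟩

lemma NFCoherent.of_hom {e₁ e₂ f₁ f₂ : Elts H} (u : e₁ ⟶ e₂) (v : f₁ ⟶ f₂)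
    (h : NFCoherent e₁ f₁) : NFCoherent e₂ f₂ := fun Z ι κ => by
  have := h Z (u.1 ≫ ι) (v.1 ≫ κ)
  rw [H.map_comp, H.map_comp] at this
  change (H.obj Z).coh ((H.map ι).toFun ((H.map u.1).toFun e₁.2))
    ((H.map κ).toFun ((H.map v.1).toFun f₁.2)) at this
  rwa [show (H.map u.1).toFun e₁.2 = e₂.2 from u.2, show (H.map v.1).toFun f₁.2 = f₂.2 from v.2]
    at this

lemma nfCoherent_congr {e₁ e₂ f₁ f₂ : Elts H} (σ : e₁ ≅ e₂) (τ : f₁ ≅ f₂) :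
    NFCoherent e₁ f₁ ↔ NFCoherent e₂ f₂ :=
  ⟨NFCoherent.of_hom σ.hom τ.hom, NFCoherent.of_hom σ.inv τ.inv⟩

lemma nfCoherent_map_iff (η : H ⟶ H') {X Y : CohTuple m} (x : (H.obj X).web)
    (y : (H.obj Y).web) :
    NFCoherent (F := H') ⟨X, (η.app X).toFun x⟩ ⟨Y, (η.app Y).toFun y⟩ ↔
      NFCoherent (F := H) ⟨X, x⟩ ⟨Y, y⟩ := by
  refine forall_congr' fun Z => forall_congr' fun ι => forall_congr' fun κ => ?_
  change (H'.obj Z).coh _ _ ↔ (H.obj Z).coh ((H.map ι).toFun x) ((H.map κ).toFun y)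
  rw [(η.app Z).coh_iff, naturality_toFun, naturality_toFun]

end NormalForm

section Trace

variable {m : ℕ} {H H' H'' : CohTuple m ⥤ CohSpace}

abbrev Tr.mk (c : CanonNF H) : (Tr H).web := Quotient.mk (traceSetoid H) c

lemma Tr.mk_eq_mk_iff {c c' : CanonNF H} :
    Tr.mk c = Tr.mk c' ↔
      ∃ ρ : canonTuple c.1 ≅ canonTuple c'.1, (H.map ρ.hom).toFun c.2.1 = c'.2.1 := by
  refine ⟨fun h => ?_, fun ⟨ρ, hρ⟩ => Quotient.sound ⟨CategoryOfElements.isoMk _ _ ρ hρ⟩⟩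
  obtain ⟨σ⟩ := Quotient.exact h
  exact ⟨(CategoryOfElements.π _).mapIso σ, σ.hom.2⟩

lemma Tr.coh_mk_iff {c c' : CanonNF H} :
    (Tr H).coh (Tr.mk c) (Tr.mk c') ↔ NFCoherent c.toElts c'.toElts := by
  refine ⟨fun ⟨b, b', hb, hb', h⟩ => ?_, fun h => ⟨c, c', rfl, rfl, h⟩⟩
  obtain ⟨σ⟩ := Quotient.exact hb
  obtain ⟨σ'⟩ := Quotient.exact hb'
  exact (nfCoherent_congr σ σ').1 h

namespace CanonNF

def map {η : H ⟶ H'} (hη : IsCartesian η) (c : CanonNF H) : CanonNF H' :=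
  ⟨c.1, (η.app _).toFun c.2.1, c.2.2.1.map hη, (nfCoherent_map_iff η _ _).2 c.2.2.2⟩

def pull (η : H ⟶ H') (c : CanonNF H') (y : (H.obj (canonTuple c.1)).web)
    (hy : (η.app _).toFun y = c.2.1) : CanonNF H :=
  ⟨c.1, y, IsNormalForm.of_map η c.2.2.1.1 (hy ▸ c.2.2.1),
    (nfCoherent_map_iff η y y).1 (hy ▸ c.2.2.2)⟩

lemma map_pull {η : H ⟶ H'} (hη : IsCartesian η) (c : CanonNF H')
    (y : (H.obj (canonTuple c.1)).web) (hy : (η.app _).toFun y = c.2.1) :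
    (c.pull η y hy).map hη = c :=
  Sigma.ext rfl (heq_of_eq (Subtype.ext hy))

end CanonNF

lemma Tr.mk_map_eq_mk_map_iff {η : H ⟶ H'} (hη : IsCartesian η) {c c' : CanonNF H} :
    Tr.mk (c.map hη) = Tr.mk (c'.map hη) ↔ Tr.mk c = Tr.mk c' := by
  simp only [Tr.mk_eq_mk_iff]
  exact exists_congr fun ρ =>
    ⟨fun h => (η.app _).inj ((naturality_toFun η ρ.hom c.2.1).trans h),
      fun h => (naturality_toFun η ρ.hom c.2.1).symm.trans (congrArg _ h)⟩

def trMap {η : H ⟶ H'} (hη : IsCartesian η) : Tr H ⟶ Tr H' where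
  toFun := Quotient.map (CanonNF.map hη) fun _ _ h =>
    Quotient.exact ((Tr.mk_map_eq_mk_map_iff hη).2 (Quotient.sound h))
  inj := by
    rintro ⟨c⟩ ⟨c'⟩ h
    exact (Tr.mk_map_eq_mk_map_iff hη).1 h
  coh_iff := by
    rintro ⟨c⟩ ⟨c'⟩
    exact Tr.coh_mk_iff.trans ((nfCoherent_map_iff η _ _).symm.trans
      (Tr.coh_mk_iff (c := c.map hη) (c' := c'.map hη)).symm)

lemma trMap_eq_id {η : H ⟶ H} (hη : IsCartesian η) (h : η = 𝟙 H) : trMap hη = 𝟙 (Tr H) := by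
  subst h
  exact CohEmb.ext (funext (Quotient.ind fun _ => rfl))

lemma trMap_eq_comp {η : H ⟶ H'} {η' : H' ⟶ H''} {η'' : H ⟶ H''} (hη : IsCartesian η)
    (hη' : IsCartesian η') (hη'' : IsCartesian η'') (h : η'' = η ≫ η') :
    trMap hη'' = trMap hη ≫ trMap hη' := by
  subst h
  exact CohEmb.ext (funext (Quotient.ind fun _ => rfl))

end Trace

section Extension

variable {n : ℕ}

lemma gfam_obj_of_lt {X : CohTuple n} {i : Fin (n + 1)} (h : (i : ℕ) < n) (Z : CohTuple 1) :
    (gfam X i).obj Z = X ⟨i, h⟩ := by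
  simp only [gfam, dif_pos h]; rfl

lemma gfam_obj_of_not_lt {X : CohTuple n} {i : Fin (n + 1)} (h : ¬ (i : ℕ) < n)
    (Z : CohTuple 1) : (gfam X i).obj Z = Z 0 := by
  simp only [gfam, dif_neg h]; rfl

lemma gfam_map_of_lt (X : CohTuple n) {i : Fin (n + 1)} (h : (i : ℕ) < n) {Z Z' : CohTuple 1}
    (u : Z ⟶ Z') :
    (gfam X i).map u =
      eqToHom (gfam_obj_of_lt h Z) ≫ 𝟙 (X ⟨i, h⟩) ≫ eqToHom (gfam_obj_of_lt h Z').symm := by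
  rw [conj_eqToHom_iff_heq _ _ _ (gfam_obj_of_lt h Z'), gfam, dif_pos h]
  rfl

lemma gfam_map_of_not_lt (X : CohTuple n) {i : Fin (n + 1)} (h : ¬ (i : ℕ) < n)
    {Z Z' : CohTuple 1} (u : Z ⟶ Z') :
    (gfam X i).map u =
      eqToHom (gfam_obj_of_not_lt h Z) ≫ u 0 ≫ eqToHom (gfam_obj_of_not_lt h Z').symm := by
  rw [conj_eqToHom_iff_heq _ _ _ (gfam_obj_of_not_lt h Z'), gfam, dif_neg h]
  rfl

lemma extHom_of_lt {X Y : CohTuple n} (ι : X ⟶ Y) (Z : CohTuple 1) {i : Fin (n + 1)}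
    (h : (i : ℕ) < n) :
    extHom ι Z i =
      eqToHom (gfam_obj_of_lt h Z) ≫ ι ⟨i, h⟩ ≫ eqToHom (gfam_obj_of_lt (X := Y) h Z).symm := by
  rw [conj_eqToHom_iff_heq _ _ _ (gfam_obj_of_lt h Z), extHom, dif_pos h]
  exact cast_heq _ _

lemma extHom_of_not_lt {X Y : CohTuple n} (ι : X ⟶ Y) (Z : CohTuple 1) {i : Fin (n + 1)}
    (h : ¬ (i : ℕ) < n) :
    extHom ι Z i =
      eqToHom (gfam_obj_of_not_lt h Z) ≫ 𝟙 (Z 0) ≫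
        eqToHom (gfam_obj_of_not_lt (X := Y) h Z).symm := by
  rw [conj_eqToHom_iff_heq _ _ _ (gfam_obj_of_not_lt h Z), extHom, dif_neg h]
  exact cast_heq _ _

lemma extHom_id (X : CohTuple n) (Z : CohTuple 1) (i : Fin (n + 1)) :
    extHom (𝟙 X) Z i = 𝟙 _ := by
  by_cases h : (i : ℕ) < n
  · simp [extHom_of_lt _ _ h]
  · simp [extHom_of_not_lt _ _ h]

lemma extHom_comp {X Y W : CohTuple n} (ι : X ⟶ Y) (κ : Y ⟶ W) (Z : CohTuple 1)
    (i : Fin (n + 1)) : extHom (ι ≫ κ) Z i = extHom ι Z i ≫ extHom κ Z i := by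
  by_cases h : (i : ℕ) < n
  · simp [extHom_of_lt _ _ h]
  · simp [extHom_of_not_lt _ _ h]

lemma extHom_naturality {X Y : CohTuple n} (ι : X ⟶ Y) {Z Z' : CohTuple 1} (u : Z ⟶ Z')
    (i : Fin (n + 1)) : (gfam X i).map u ≫ extHom ι Z' i = extHom ι Z i ≫ (gfam Y i).map u := by
  by_cases h : (i : ℕ) < n
  · simp [extHom_of_lt _ _ h, gfam_map_of_lt _ h]
  · simp [extHom_of_not_lt _ _ h, gfam_map_of_not_lt _ h]

lemma isPullback_extHom_naturality {X Y : CohTuple n} (ι : X ⟶ Y) {W Z : CohTuple 1}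
    (u : W ⟶ Z) (i : Fin (n + 1)) :
    IsPullback (extHom ι W i) ((gfam X i).map u) ((gfam Y i).map u) (extHom ι Z i) := by
  by_cases h : (i : ℕ) < n
  · refine (IsPullback.id_vert (ι ⟨i, h⟩)).of_iso (eqToIso (gfam_obj_of_lt h W).symm)
      (eqToIso (gfam_obj_of_lt h W).symm) (eqToIso (gfam_obj_of_lt h Z).symm)
      (eqToIso (gfam_obj_of_lt h Z).symm) ?_ ?_ ?_ ?_ <;>
    simp [extHom_of_lt _ _ h, gfam_map_of_lt _ h]
  · refine (IsPullback.id_horiz (u 0)).of_iso (eqToIso (gfam_obj_of_not_lt h W).symm)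
      (eqToIso (gfam_obj_of_not_lt h W).symm) (eqToIso (gfam_obj_of_not_lt h Z).symm)
      (eqToIso (gfam_obj_of_not_lt h Z).symm) ?_ ?_ ?_ ?_ <;>
    simp [extHom_of_not_lt _ _ h, gfam_map_of_not_lt _ h]

lemma isPullback_extHom {P A B C : CohTuple n} {fst : P ⟶ A} {snd : P ⟶ B} {f : A ⟶ C}
    {g : B ⟶ C} (hpb : ∀ i, IsPullback (fst i) (snd i) (f i) (g i)) (Z : CohTuple 1)
    (i : Fin (n + 1)) :
    IsPullback (extHom fst Z i) (extHom snd Z i) (extHom f Z i) (extHom g Z i) := by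
  by_cases h : (i : ℕ) < n
  · refine (hpb ⟨i, h⟩).of_iso (eqToIso (gfam_obj_of_lt h Z).symm)
      (eqToIso (gfam_obj_of_lt h Z).symm) (eqToIso (gfam_obj_of_lt h Z).symm)
      (eqToIso (gfam_obj_of_lt h Z).symm) ?_ ?_ ?_ ?_ <;>
    simp [extHom_of_lt _ _ h]
  · refine (IsPullback.id_vert (𝟙 (Z 0))).of_iso (eqToIso (gfam_obj_of_not_lt h Z).symm)
      (eqToIso (gfam_obj_of_not_lt h Z).symm) (eqToIso (gfam_obj_of_not_lt h Z).symm)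
      (eqToIso (gfam_obj_of_not_lt h Z).symm) ?_ ?_ ?_ ?_ <;>
    simp [extHom_of_not_lt _ _ h]

variable {J : Type} [SmallCategory J] [IsFiltered J]

variable (K : J ⥤ CohTuple n) in
def extDiagram (Z : CohTuple 1) : J ⥤ CohTuple (n + 1) where
  obj j := (Functor.pi' (gfam (K.obj j))).obj Z
  map u := extHomPi (K.map u) Z
  map_id j := funext fun i => by rw [K.map_id]; exact extHom_id _ Z i
  map_comp u v := funext fun i => by rw [K.map_comp]; exact extHom_comp _ _ Z i

variable {K : J ⥤ CohTuple n}

def extCocone (c : Cocone K) (Z : CohTuple 1) : Cocone (extDiagram K Z) where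
  pt := (Functor.pi' (gfam c.pt)).obj Z
  ι.app j := extHomPi (c.ι.app j) Z
  ι.naturality j k u := funext fun i => by
    rw [← c.w u]
    exact (extHom_comp _ _ Z i).symm.trans (Category.comp_id _).symm

/-- Componentwise, `extCocone c Z` is a component of `c` or the constant cocone on `Z 0`, which
is a colimit because filtered categories are connected. -/
noncomputable def isColimitExtCocone {c : Cocone K} (hc : ∀ k, IsColimit (pi.coconeCompEval c k))
    (Z : CohTuple 1) : IsColimit (extCocone c Z) := by
  refine pi.coconeOfCoconeEvalIsColimit (c := pi.coconeCompEval (extCocone c Z)) fun i => ?_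
  by_cases h : (i : ℕ) < n
  · refine IsColimit.equivOfNatIsoOfIso
      (NatIso.ofComponents (fun j => eqToIso (gfam_obj_of_lt (X := K.obj j) h Z).symm)
        fun u => ?_) (pi.coconeCompEval c ⟨i, h⟩) (pi.coconeCompEval (extCocone c Z) i)
      (Cocone.ext (eqToIso (gfam_obj_of_lt (X := c.pt) h Z).symm) fun j => ?_) (hc ⟨i, h⟩)
    · show K.map u ⟨i, h⟩ ≫ eqToHom (gfam_obj_of_lt h Z).symm =
        eqToHom (gfam_obj_of_lt h Z).symm ≫ extHom (K.map u) Z i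
      simp [extHom_of_lt _ _ h]
    · show (eqToHom (gfam_obj_of_lt h Z) ≫ c.ι.app j ⟨i, h⟩) ≫
          eqToHom (gfam_obj_of_lt h Z).symm = extHom (c.ι.app j) Z i
      simp [extHom_of_lt _ _ h]
  · haveI := IsFiltered.isConnected J
    refine IsColimit.equivOfNatIsoOfIso
      (NatIso.ofComponents (fun j => eqToIso (gfam_obj_of_not_lt (X := K.obj j) h Z).symm)
        fun u => ?_) (constCocone J (Z 0)) (pi.coconeCompEval (extCocone c Z) i)
      (Cocone.ext (eqToIso (gfam_obj_of_not_lt (X := c.pt) h Z).symm) fun j => ?_)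
      (isColimitConstCocone J (Z 0))
    · show 𝟙 (Z 0) ≫ eqToHom (gfam_obj_of_not_lt h Z).symm =
        eqToHom (gfam_obj_of_not_lt h Z).symm ≫ extHom (K.map u) Z i
      simp [extHom_of_not_lt _ _ h]
    · show (eqToHom (gfam_obj_of_not_lt h Z) ≫ 𝟙 (Z 0)) ≫
          eqToHom (gfam_obj_of_not_lt h Z).symm = extHom (c.ι.app j) Z i
      simp [extHom_of_not_lt _ _ h]

end Extension

section Forall

variable {n : ℕ} (F : CohTuple (n + 1) ⥤ CohSpace)

def partialAppMap {X Y : CohTuple n} (ι : X ⟶ Y) : partialApp F X ⟶ partialApp F Y where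
  app Z := F.map (extHomPi ι Z)
  naturality _ _ u := by
    show F.map _ ≫ F.map _ = F.map _ ≫ F.map _
    rw [← F.map_comp, ← F.map_comp]
    exact congrArg F.map (funext (extHom_naturality ι u))

lemma partialAppMap_id (X : CohTuple n) : partialAppMap F (𝟙 X) = 𝟙 _ := by
  ext Z : 2
  exact (congrArg F.map (funext (extHom_id X Z))).trans (F.map_id _)

lemma partialAppMap_comp {X Y W : CohTuple n} (ι : X ⟶ Y) (κ : Y ⟶ W) :
    partialAppMap F (ι ≫ κ) = partialAppMap F ι ≫ partialAppMap F κ := by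
  ext Z : 2
  exact (congrArg F.map (funext (extHom_comp ι κ Z))).trans (F.map_comp _ _)

section Pullback

variable [PreservesLimitsOfShape WalkingCospan F]

lemma isCartesian_partialAppMap {X Y : CohTuple n} (ι : X ⟶ Y) :
    IsCartesian (partialAppMap F ι) := fun _ _ u _ _ h =>
  CohSpace.exists_toFun_of_isPullback
    ((isPullback_pi (isPullback_extHom_naturality ι u)).map F) h

def forallFunctor : CohTuple n ⥤ CohSpace where
  obj X := Tr (partialApp F X)
  map ι := trMap (isCartesian_partialAppMap F ι)
  map_id X := trMap_eq_id _ (partialAppMap_id F X)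
  map_comp ι κ := trMap_eq_comp _ _ _ (partialAppMap_comp F ι κ)

lemma isPullback_forallFunctor_map {P A B C : CohTuple n} {fst : P ⟶ A} {snd : P ⟶ B}
    {f : A ⟶ C} {g : B ⟶ C} (hpb : ∀ i, IsPullback (fst i) (snd i) (f i) (g i)) :
    IsPullback ((forallFunctor F).map fst) ((forallFunctor F).map snd)
      ((forallFunctor F).map f) ((forallFunctor F).map g) := by
  refine CohSpace.isPullback_of_exists_toFun
    (by rw [← Functor.map_comp, ← Functor.map_comp, (isPullback_pi hpb).w]) ?_
  rintro ⟨c⟩ ⟨c'⟩ h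
  -- Move the point of `c` onto the tuple of `c'`, then lift through `F` of a pullback square.
  obtain ⟨ρ, hρ⟩ := Tr.mk_eq_mk_iff.1 h
  have hx : ((partialAppMap F f).app _).toFun (((partialApp F A).map ρ.hom).toFun c.2.1) =
      ((partialAppMap F g).app _).toFun c'.2.1 :=
    (naturality_toFun _ _ _).trans hρ
  obtain ⟨v, hv, hv'⟩ := CohSpace.exists_toFun_of_isPullback
    ((isPullback_pi (isPullback_extHom hpb (canonTuple c'.1))).map F) hx
  refine ⟨Tr.mk (c'.pull (partialAppMap F snd) v hv'), ?_,
    congrArg Tr.mk (CanonNF.map_pull _ _ _ _)⟩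
  exact (Tr.mk_eq_mk_iff
    (c' := (c'.pull (partialAppMap F snd) v hv').map (isCartesian_partialAppMap F fst)).2
    ⟨ρ, hv.symm⟩).symm

lemma preservesLimitsOfShape_forallFunctor :
    PreservesLimitsOfShape WalkingCospan (forallFunctor F) :=
  preservesLimitsOfShape_walkingCospan_of_isPullback _ fun f g =>
    ⟨_, fun i => CohSpace.pullbackFst (f i) (g i), fun i => CohSpace.pullbackSnd (f i) (g i),
      isPullback_pi fun _ => CohSpace.isPullback_pullback _ _,
      isPullback_forallFunctor_map F fun _ => CohSpace.isPullback_pullback _ _⟩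

end Pullback

section FilteredColimit

variable [PreservesFilteredColimits F] {J : Type} [SmallCategory J] [IsFiltered J]
  {K : J ⥤ CohTuple n}

lemma exists_partialAppMap_toFun_eq {c : Cocone K} (hc : ∀ k, IsColimit (pi.coconeCompEval c k))
    {Z : CohTuple 1} (x : ((partialApp F c.pt).obj Z).web) :
    ∃ (j : J) (y : ((partialApp F (K.obj j)).obj Z).web),
      ((partialAppMap F (c.ι.app j)).app Z).toFun y = x :=
  CohSpace.exists_toFun_eq_of_isColimit (isColimitOfPreserves F (isColimitExtCocone hc Z)) x

variable [PreservesLimitsOfShape WalkingCospan F]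

noncomputable def isColimitForallFunctorMapCocone {c : Cocone K}
    (hc : ∀ k, IsColimit (pi.coconeCompEval c k)) : IsColimit ((forallFunctor F).mapCocone c) :=
  CohSpace.isColimitOfSurjective _ <| Quotient.ind fun c' => by
    obtain ⟨j, y, hy⟩ := exists_partialAppMap_toFun_eq F hc c'.2.1
    exact ⟨j, Tr.mk (c'.pull _ y hy), congrArg Tr.mk (CanonNF.map_pull _ _ _ _)⟩

end FilteredColimit

lemma preservesFilteredColimits_forallFunctor [PreservesLimitsOfShape WalkingCospan F]
    [PreservesFilteredColimits F] : PreservesFilteredColimits (forallFunctor F) where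
  preserves_filtered_colimits _ _ _ := ⟨fun {K} =>
    preservesColimit_of_preserves_colimit_cocone (isColimitPiFilteredColimitCocone K)
      (isColimitForallFunctorMapCocone F fun _ => CohSpace.isColimitFilteredColimitCocone _)⟩

end Forall

theorem stmt6 {n : ℕ} (F : CohTuple (n + 1) ⥤ CohSpace) (hF : IsNormalFunctor F) :
    ∃ G : CohTuple n ⥤ CohSpace,
      IsNormalFunctor G ∧ ∀ X : CohTuple n, G.obj X = Tr (partialApp F X) := by
  obtain ⟨hfilt, hpb⟩ := hF
  exact ⟨forallFunctor F,
    ⟨preservesFilteredColimits_forallFunctor F, preservesLimitsOfShape_forallFunctor F⟩,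
    fun _ => rfl⟩
end
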